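/- Let N ≥ 1 and let m ≥ 2 be an even integer. Let C_0 ⊊ C_1 ⊊ ⋯ ⊊ C_m be a strictly increasing chain of F_2-linear subspaces of F_2^N with {0} ⊊ C_0, C_m = F_2^N, and C_r^⊥ = C_{m−r−1} for all 0 ≤ r ≤ m−1 (the binary Reed–Muller codes C_r = R(r, m) of length N = 2^m satisfy all of these hypotheses). Then there exist real numbers 1 > α_0 > α_1 > ⋯ > α_{m/2 − 1} > 1/2 and a fuzzy self-orthogonal code B in F_2^N such that B_1 = {0} and B_{α_r} = C_r for all 0 ≤ r ≤ m/2 − 1. -/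

import Mathlib

/-!
Grade each vector by the first member of the chain `{0} ⊊ C₀ ⊊ ⋯ ⊊ C_m` that contains it,
and let membership fall linearly with this depth: `B x = 1 - depth x / (m + 1)`. The level cuts
of `B` are then exactly the members of the chain, `C_r` sitting at level `1 - (r + 1)/(m + 1)`.
The complementary level `(r + 1)/(m + 1)` is the level of `C_{m-r-1}`, so the duality
`C_r^⊥ = C_{m-r-1}` of the chain is precisely the condition `(B_{1-α})^⊥ = B_α`.
-/

open scoped BigOperators

/-- A fuzzy set in `V`: a membership function with values in `[0,1]`. -/
def IsFuzzySet {V : Type*} (A : V → ℝ) : Prop :=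
  ∀ x, 0 ≤ A x ∧ A x ≤ 1

/-- The upper `α`-level cut of a fuzzy set `A`. -/
def levelCut {V : Type*} (A : V → ℝ) (α : ℝ) : Set V :=
  {x | α ≤ A x}

/-- A set of vectors is an `F`-linear subspace. -/
def IsFLinearSubset (F : Type*) {V : Type*} [Field F] [AddCommGroup V] [Module F V]
    (s : Set V) : Prop :=
  ∃ W : Submodule F V, s = (W : Set V)

/-- A fuzzy linear code: a fuzzy set all of whose nonempty upper `α`-level cuts
(for `α ∈ [0,1]`) are linear subspaces. -/
def IsFuzzyLinearCode (F : Type*) {V : Type*} [Field F] [AddCommGroup V] [Module F V]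
    (A : V → ℝ) : Prop :=
  IsFuzzySet A ∧
    ∀ α ∈ Set.Icc (0 : ℝ) 1, (levelCut A α).Nonempty → IsFLinearSubset F (levelCut A α)

/-- The Euclidean dual of a set of vectors in `F^n`. -/
def dualSet {F : Type*} [Field F] {n : ℕ} (S : Set (Fin n → F)) : Set (Fin n → F) :=
  {y | ∀ x ∈ S, ∑ i, x i * y i = 0}

/-- A fuzzy self-orthogonal code: a fuzzy linear code with `|Im A| > 1` such that
`(A_{1-α})^⊥ = A_α` for every `α ∈ Im A`. -/
def IsFuzzySelfOrthogonal {F : Type*} [Field F] {n : ℕ} (A : (Fin n → F) → ℝ) : Prop :=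
  IsFuzzyLinearCode F A ∧ 1 < (Set.range A).ncard ∧
    ∀ α ∈ Set.range A, dualSet (levelCut A (1 - α)) = levelCut A α

/-- A fuzzy self-dual code: a fuzzy self-orthogonal code such that `(A_β)^⊥ = A_β`
for some `β ∈ Im A`. -/
def IsFuzzySelfDual {F : Type*} [Field F] {n : ℕ} (A : (Fin n → F) → ℝ) : Prop :=
  IsFuzzySelfOrthogonal A ∧ ∃ β ∈ Set.range A, dualSet (levelCut A β) = levelCut A β

open Set

theorem isFuzzyLinearCode_of_min_le_add {F V : Type*} [Field F] [AddCommGroup V] [Module F V]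
    {B : V → ℝ} (hB : IsFuzzySet B) (hadd : ∀ x y, min (B x) (B y) ≤ B (x + y))
    (hsmul : ∀ (c : F) x, B x ≤ B (c • x)) : IsFuzzyLinearCode F B := by
  refine ⟨hB, fun α _ ⟨x, hx⟩ => ⟨
    { carrier := levelCut B α
      add_mem' := fun ha hb => (le_min ha hb).trans (hadd _ _)
      zero_mem' := show α ≤ B 0 by simpa using hx.trans (hsmul 0 x)
      smul_mem' := fun c x hx => hx.trans (hsmul c x) }, rfl⟩⟩

section Depth

variable {R M : Type*} [Semiring R] [AddCommMonoid M] [Module R M]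
  {D : ℕ → Submodule R M} {n k : ℕ} {x y : M}

noncomputable def chainDepth (D : ℕ → Submodule R M) (x : M) : ℕ :=
  sInf {k | x ∈ D k}

theorem chainDepth_le (htop : D n = ⊤) : chainDepth D x ≤ n :=
  Nat.sInf_le (by simp [htop])

theorem chainDepth_le_iff (hD : MonotoneOn D (Iic n)) (htop : D n = ⊤) (hk : k ≤ n) :
    chainDepth D x ≤ k ↔ x ∈ D k := by
  refine ⟨fun h => ?_, fun h => Nat.sInf_le h⟩
  have hne : {k | x ∈ D k}.Nonempty := ⟨n, by simp [htop]⟩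
  exact hD (mem_Iic.2 (h.trans hk)) (mem_Iic.2 hk) h (Nat.sInf_mem hne)

theorem chainDepth_add_le (hD : MonotoneOn D (Iic n)) (htop : D n = ⊤) :
    chainDepth D (x + y) ≤ max (chainDepth D x) (chainDepth D y) := by
  have hmax := max_le (chainDepth_le (x := x) htop) (chainDepth_le (x := y) htop)
  rw [chainDepth_le_iff hD htop hmax]
  exact add_mem ((chainDepth_le_iff hD htop hmax).1 (le_max_left _ _))
    ((chainDepth_le_iff hD htop hmax).1 (le_max_right _ _))

theorem chainDepth_smul_le (hD : MonotoneOn D (Iic n)) (htop : D n = ⊤) (c : R) :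
    chainDepth D (c • x) ≤ chainDepth D x := by
  rw [chainDepth_le_iff hD htop (chainDepth_le htop)]
  exact Submodule.smul_mem _ c ((chainDepth_le_iff hD htop (chainDepth_le htop)).1 le_rfl)

end Depth

section ChainFuzzySet

variable {R M : Type*} [Semiring R] [AddCommMonoid M] [Module R M]
  {D : ℕ → Submodule R M} {n k : ℕ}

noncomputable def chainFuzzySet (D : ℕ → Submodule R M) (n : ℕ) (x : M) : ℝ :=
  1 - chainDepth D x / n

theorem isFuzzySet_chainFuzzySet (htop : D n = ⊤) : IsFuzzySet (chainFuzzySet D n) := fun _ =>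
  ⟨sub_nonneg.2 (div_le_one_of_le₀ (by exact_mod_cast chainDepth_le htop) n.cast_nonneg),
    sub_le_self _ (by positivity)⟩

theorem levelCut_chainFuzzySet (hD : MonotoneOn D (Iic n)) (htop : D n = ⊤) (hn : 0 < n)
    (hk : k ≤ n) : levelCut (chainFuzzySet D n) (1 - k / n) = D k := by
  ext x
  simp only [levelCut, chainFuzzySet, mem_ofPred_eq, SetLike.mem_coe, sub_le_sub_iff_left]
  rw [div_le_div_iff_of_pos_right (by positivity), Nat.cast_le, chainDepth_le_iff hD htop hk]

theorem levelCut_one_chainFuzzySet (hD : MonotoneOn D (Iic n)) (hbot : D 0 = ⊥)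
    (htop : D n = ⊤) (hn : 0 < n) : levelCut (chainFuzzySet D n) 1 = {0} := by
  simpa [hbot] using levelCut_chainFuzzySet hD htop hn (Nat.zero_le n)

end ChainFuzzySet

theorem isFuzzyLinearCode_chainFuzzySet {F V : Type*} [Field F] [AddCommGroup V] [Module F V]
    {D : ℕ → Submodule F V} {n : ℕ} (hD : MonotoneOn D (Iic n)) (htop : D n = ⊤) :
    IsFuzzyLinearCode F (chainFuzzySet D n) := by
  have hanti : Antitone fun t : ℕ => 1 - (t : ℝ) / n := fun a b h =>
    sub_le_sub_left (div_le_div_of_nonneg_right (by exact_mod_cast h) n.cast_nonneg) 1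
  refine isFuzzyLinearCode_of_min_le_add (isFuzzySet_chainFuzzySet htop) (fun x y => ?_)
    (fun c x => hanti (chainDepth_smul_le hD htop c))
  exact hanti.map_max.symm.le.trans (hanti (chainDepth_add_le hD htop))

section Dual

variable {F : Type*} [Field F] {N : ℕ}

theorem dualSet_singleton_zero : dualSet ({0} : Set (Fin N → F)) = univ := by
  ext
  simp [dualSet]

theorem dualSet_univ : dualSet (univ : Set (Fin N → F)) = {0} := by
  ext y
  simp only [dualSet, mem_univ, true_implies, mem_ofPred_eq, mem_singleton_iff]
  refine ⟨fun h => funext fun i => by simpa [Pi.single_apply] using h (Pi.single i 1), ?_⟩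
  rintro rfl x
  simp

theorem isFuzzySelfOrthogonal_chainFuzzySet [Nontrivial (Fin N → F)]
    {D : ℕ → Submodule F (Fin N → F)} {n : ℕ} (hD : MonotoneOn D (Iic n)) (hbot : D 0 = ⊥)
    (htop : D n = ⊤) (hdual : ∀ k ≤ n, dualSet (D k : Set (Fin N → F)) = D (n - k)) :
    IsFuzzySelfOrthogonal (chainFuzzySet D n) := by
  have hn : 0 < n := Nat.pos_of_ne_zero fun h => bot_ne_top (hbot ▸ h ▸ htop)
  have hcut1 := levelCut_one_chainFuzzySet hD hbot htop hn
  refine ⟨isFuzzyLinearCode_chainFuzzySet hD htop, ?_, ?_⟩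
  · have hfin : (range (chainFuzzySet D n)).Finite :=
      ((finite_Iic n).image fun t : ℕ => 1 - (t : ℝ) / n).subset
        (range_subset_iff.2 fun x => ⟨_, mem_Iic.2 (chainDepth_le htop), rfl⟩)
    obtain ⟨x, hx⟩ := exists_ne (0 : Fin N → F)
    have h0 : (0 : Fin N → F) ∈ levelCut (chainFuzzySet D n) 1 := hcut1 ▸ rfl
    have hx1 : x ∉ levelCut (chainFuzzySet D n) 1 := hcut1 ▸ hx
    rw [one_lt_ncard_iff hfin]
    exact ⟨_, _, ⟨0, rfl⟩, ⟨x, rfl⟩, fun h => hx1 (le_of_le_of_eq h0 h)⟩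
  · rintro _ ⟨x, rfl⟩
    have hx := chainDepth_le (x := x) htop
    have hcompl : 1 - chainFuzzySet D n x = 1 - ((n - chainDepth D x : ℕ) : ℝ) / n := by
      rw [chainFuzzySet, Nat.cast_sub hx]
      field_simp
    rw [hcompl, levelCut_chainFuzzySet hD htop hn (Nat.sub_le _ _), hdual _ (Nat.sub_le _ _),
      Nat.sub_sub_self hx]
    exact (levelCut_chainFuzzySet hD htop hn hx).symm

end Dual

section PrependBot

variable {R M : Type*} [Semiring R] [AddCommMonoid M] [Module R M]
  {C : ℕ → Submodule R M} {m : ℕ}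

def prependBot (C : ℕ → Submodule R M) : ℕ → Submodule R M
  | 0 => ⊥
  | r + 1 => C r

theorem monotoneOn_prependBot (hC : ∀ r < m, C r ≤ C (r + 1)) :
    MonotoneOn (prependBot C) (Iic (m + 1)) := by
  refine monotoneOn_of_le_add_one ordConnected_Iic fun a _ _ ha => ?_
  rcases a with _ | r
  · exact bot_le
  · exact hC r (by simp only [mem_Iic] at ha; omega)

end PrependBot

theorem dualSet_prependBot {F : Type*} [Field F] {N m : ℕ} {C : ℕ → Submodule F (Fin N → F)}
    (htop : C m = ⊤) (hdual : ∀ r < m, dualSet (C r : Set (Fin N → F)) = C (m - r - 1)) :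
    ∀ k ≤ m + 1, dualSet (prependBot C k : Set (Fin N → F)) = prependBot C (m + 1 - k) := by
  rintro (_ | r) hr
  · simp [prependBot, htop, dualSet_singleton_zero]
  · rcases (Nat.le_of_succ_le_succ hr).lt_or_eq with hrm | rfl
    · rw [show m + 1 - (r + 1) = m - r - 1 + 1 by omega]
      exact hdual r hrm
    · simp [prependBot, htop, dualSet_univ]

theorem fuzzySelfOrthogonal_of_ReedMuller_chain_even_general
    {N m : ℕ} (hm : 2 ≤ m)
    (C : ℕ → Submodule (ZMod 2) (Fin N → ZMod 2))
    (hchain : ∀ r < m, C r < C (r + 1))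
    (h0 : ⊥ < C 0)
    (htop : C m = ⊤)
    (hdual : ∀ r ≤ m - 1,
      dualSet (C r : Set (Fin N → ZMod 2)) = (C (m - r - 1) : Set (Fin N → ZMod 2))) :
    ∃ α : ℕ → ℝ,
      α 0 < 1 ∧ (∀ r < m / 2 - 1, α (r + 1) < α r) ∧ 1 / 2 < α (m / 2 - 1) ∧
      ∃ B : (Fin N → ZMod 2) → ℝ,
        IsFuzzySelfOrthogonal B ∧
        levelCut B 1 = {0} ∧
        ∀ r ≤ m / 2 - 1, levelCut B (α r) = (C r : Set (Fin N → ZMod 2)) := by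
  have : Nontrivial (Fin N → ZMod 2) :=
    (Submodule.nontrivial_iff (ZMod 2)).1 (nontrivial_of_lt _ _ h0)
  have hD := monotoneOn_prependBot fun r hr => (hchain r hr).le
  have hn : 0 < m + 1 := m.succ_pos
  refine ⟨fun r => 1 - ((r + 1 : ℕ) : ℝ) / ((m + 1 : ℕ) : ℝ), ?_, fun r _ => ?_, ?_,
    chainFuzzySet (prependBot C) (m + 1),
    isFuzzySelfOrthogonal_chainFuzzySet hD rfl htop
      (dualSet_prependBot htop fun r hr => hdual r (by omega)),
    levelCut_one_chainFuzzySet hD rfl htop hn,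
    fun r hr => levelCut_chainFuzzySet hD htop hn (by omega)⟩
  · simp only [sub_lt_self_iff]
    positivity
  · dsimp only
    gcongr
    exact r.lt_succ_self
  · have hhalf : (2 : ℝ) * ((m / 2 - 1 + 1 : ℕ) : ℝ) < ((m + 1 : ℕ) : ℝ) := by
      exact_mod_cast (by omega : 2 * (m / 2 - 1 + 1) < m + 1)
    rw [lt_sub_comm, div_lt_iff₀ (by positivity)]
    linarith

/-- even case, Reed–Muller-type chains: given a strictly increasing chain
`{0} ⊊ C 0 ⊊ C 1 ⊊ ⋯ ⊊ C m = F_2^N` of binary linear codes with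
`(C r)^⊥ = C (m - r - 1)` for `0 ≤ r ≤ m - 1`, where `m ≥ 2` is even, there are reals
`1 > α 0 > ⋯ > α (m/2 - 1) > 1/2` and a fuzzy self-orthogonal code `B` in `F_2^N` with
`B_1 = {0}` and `B_{α r} = C r` for `0 ≤ r ≤ m/2 - 1`. -/
theorem fuzzySelfOrthogonal_of_ReedMuller_chain_even
    {N m : ℕ} (hN : 1 ≤ N) (hm : 2 ≤ m) (hmeven : Even m)
    (C : ℕ → Submodule (ZMod 2) (Fin N → ZMod 2))
    (hchain : ∀ r < m, C r < C (r + 1))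
    (h0 : ⊥ < C 0)
    (htop : C m = ⊤)
    (hdual : ∀ r ≤ m - 1,
      dualSet (C r : Set (Fin N → ZMod 2)) = (C (m - r - 1) : Set (Fin N → ZMod 2))) :
    ∃ α : ℕ → ℝ,
      α 0 < 1 ∧ (∀ r < m / 2 - 1, α (r + 1) < α r) ∧ 1 / 2 < α (m / 2 - 1) ∧
      ∃ B : (Fin N → ZMod 2) → ℝ,
        IsFuzzySelfOrthogonal B ∧
        levelCut B 1 = {0} ∧
        ∀ r ≤ m / 2 - 1, levelCut B (α r) = (C r : Set (Fin N → ZMod 2)) :=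
  fuzzySelfOrthogonal_of_ReedMuller_chain_even_general hm C hchain h0 htop hdual
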